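/- arXiv:2408.05922 — 6 statements merged into one kernel-verified Lean document; each statement's English description precedes it below -/
import Mathlib

section
/- Fix n ≥ 3 and a basis β = (b_1, …, b_{n-1}) of an (n−1)-dimensional subspace together with a prescribed value forcing b_0 = b_1 + ⋯ + b_{n-1}; then the number of choices, up to the automorphism group GL_n(𝔽_2) acting on characteristic data, of pairs (b_n, b_{n+1}) with b_n, b_{n+1} ∉ span{b_1,…,b_{n-1}}, counted modulo GL_n(𝔽_2), is 2^{n-1}. Consequently, the total number of D-J equivalence classes of ℤ/2-characteristic functions on the prism Δ^{n-1} × I is 1 + 2^{n-1}. -/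
/-- A `ℤ/2`-characteristic function on the prism `Δ^{n-1} × I`: the facets are
`F_0,…,F_{n-1}` (side facets), `F_n` (bottom) and `F_{n+1}` (top), indexed by `Fin (n+2)`.
At each vertex `v_k` (resp. `w_{k+1}`), `0 ≤ k ≤ n-1`, the `n` facets containing it are
`{F_j : j < n, j ≠ k} ∪ {F_n}` (resp. `∪ {F_{n+1}}`), and their characteristic vectors must
form a basis of `(ℤ/2)ⁿ`. -/
def prismCharFn (n : ℕ) (l : Fin (n + 2) → (Fin n → ZMod 2)) : Prop :=
  ∀ k : Fin n,
    (LinearIndependent (ZMod 2)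
        (fun j : {j : Fin (n + 2) // ((j : ℕ) < n ∧ (j : ℕ) ≠ (k : ℕ)) ∨ (j : ℕ) = n} =>
          l j.1) ∧
      Submodule.span (ZMod 2)
        (l '' {j | ((j : ℕ) < n ∧ (j : ℕ) ≠ (k : ℕ)) ∨ (j : ℕ) = n}) = ⊤) ∧
    (LinearIndependent (ZMod 2)
        (fun j : {j : Fin (n + 2) // ((j : ℕ) < n ∧ (j : ℕ) ≠ (k : ℕ)) ∨ (j : ℕ) = n + 1} =>
          l j.1) ∧
      Submodule.span (ZMod 2)
        (l '' {j | ((j : ℕ) < n ∧ (j : ℕ) ≠ (k : ℕ)) ∨ (j : ℕ) = n + 1}) = ⊤)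

/-- Davis–Januszkiewicz equivalence of characteristic data: `l₂ = θ ∘ l₁` for some
automorphism `θ` of `(ℤ/2)ⁿ`. -/
def djEquiv (n : ℕ) (l1 l2 : Fin (n + 2) → (Fin n → ZMod 2)) : Prop :=
  ∃ θ : (Fin n → ZMod 2) ≃ₗ[ZMod 2] (Fin n → ZMod 2), l2 = fun j => θ (l1 j)

/-! Every characteristic function is D-J equivalent to one normalized at the bottom vertex `v_0`,
i.e. with `b_j = e_{j-1}` for `1 ≤ j ≤ n`; such a function is determined by `(b_0, b_{n+1})`, and
two normalized functions are equivalent only if they are equal, because the automorphism has to fix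
the standard basis. For a normalized function the basis condition at each remaining vertex is the
non-vanishing of a `1 × 1` or `2 × 2` minor of `(b_0, b_{n+1})`: over `𝔽_2` this says that `b_0`
has all coordinates but the last equal to `1`, that `b_{n+1}` has last coordinate `1`, and that
`b_{0,n-1} b_{n+1,i} = 0` for `i < n - 1`. So either `b_0 = e_0 + ⋯ + e_{n-2}` (the first method,
with `2^{n-1}` free choices of `b_{n+1}`), or `b_0 = e_0 + ⋯ + e_{n-1}` and `b_{n+1} = e_{n-1}`
(the second method). -/

open Submodule

section LinearAlgebra

variable {K ι : Type*} [Field K] [Fintype ι] [DecidableEq ι]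

theorem span_eq_top_iff_dotProduct {S : Set (ι → K)} :
    span K S = ⊤ ↔ ∀ c : ι → K, (∀ x ∈ S, c ⬝ᵥ x = 0) → c = 0 := by
  constructor
  · intro h c hc
    have hle : span K S ≤ LinearMap.ker (dotProductEquiv K ι c) := span_le.2 hc
    rw [h, top_le_iff, LinearMap.ker_eq_top] at hle
    exact (dotProductEquiv K ι).map_eq_zero_iff.1 hle
  · intro h
    by_contra hS
    obtain ⟨f, hf, hle⟩ := (span K S).exists_le_ker_of_lt_top (lt_top_iff_ne_top.2 hS)
    obtain ⟨c, rfl⟩ := (dotProductEquiv K ι).surjective f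
    exact hf (by rw [h c fun x hx => hle (subset_span hx), map_zero])

theorem span_insert_single_compl_eq_top_iff {p : ι} {x : ι → K} :
    span K (insert x ((fun i => Pi.single i 1) '' {p}ᶜ)) = ⊤ ↔ x p ≠ 0 := by
  simp only [span_eq_top_iff_dotProduct, Set.forall_mem_insert, Set.forall_mem_image,
    Set.mem_compl_singleton_iff, dotProduct_single_one]
  constructor
  · intro h hx
    have h1 := congrFun (h (Pi.single p 1) ⟨?_, fun i hi => ?_⟩) p
    · simp at h1
    · rw [single_one_dotProduct, hx]
    · exact Pi.single_eq_of_ne hi 1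
  · rintro hx c ⟨hcx, hc⟩
    have hsingle : c = Pi.single p (c p) := by
      funext i
      by_cases hi : i = p
      · subst hi; simp
      · simp [hi, hc hi]
    rw [hsingle, single_dotProduct, mul_eq_zero] at hcx
    rw [hsingle, hcx.resolve_right hx, Pi.single_zero]

theorem span_insert_insert_single_compl_eq_top_iff {p q : ι} (hpq : p ≠ q) {x y : ι → K} :
    span K (insert x (insert y ((fun i => Pi.single i 1) '' {p, q}ᶜ))) = ⊤ ↔
      x p * y q - x q * y p ≠ 0 := by
  simp only [span_eq_top_iff_dotProduct, Set.forall_mem_insert, Set.forall_mem_image]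
  simp only [Set.mem_compl_iff, Set.mem_insert_iff, Set.mem_singleton_iff, not_or,
    dotProduct_single_one]
  have hpair : ∀ s t : K, ∀ z : ι → K,
      (Pi.single p s + Pi.single q t) ⬝ᵥ z = s * z p + t * z q := fun s t z => by
    rw [add_dotProduct, single_dotProduct, single_dotProduct]
  constructor
  · intro h hdet
    obtain ⟨w, hw0, hw⟩ := (Matrix.exists_mulVec_eq_zero_iff (M := !![x p, x q; y p, y q])).2
      (by rw [Matrix.det_fin_two_of]; linear_combination hdet)
    have hw' := congrFun hw
    simp only [Fin.forall_fin_two, Matrix.mulVec, dotProduct, Fin.sum_univ_two] at hw'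
    have hc := h (Pi.single p (w 0) + Pi.single q (w 1)) ⟨?_, ?_, fun i ⟨hip, hiq⟩ => ?_⟩
    · apply hw0
      ext i
      fin_cases i
      · simpa [hpq] using congrFun hc p
      · simpa [hpq.symm] using congrFun hc q
    · rw [hpair]; simpa [mul_comm] using hw'.1
    · rw [hpair]; simpa [mul_comm] using hw'.2
    · simp [hip, hiq]
  · rintro hdet c ⟨hcx, hcy, hc⟩
    have hc2 : c = Pi.single p (c p) + Pi.single q (c q) := by
      funext i
      by_cases hip : i = p
      · subst hip; simp [hpq]
      by_cases hiq : i = q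
      · subst hiq; simp [hip]
      · simp [hip, hiq, hc ⟨hip, hiq⟩]
    rw [hc2, hpair] at hcx hcy
    have hp : c p = 0 := (mul_eq_zero.1 (by linear_combination y q * hcx - x q * hcy :
      c p * (x p * y q - x q * y p) = 0)).resolve_right hdet
    have hq : c q = 0 := (mul_eq_zero.1 (by linear_combination x p * hcy - y p * hcx :
      c q * (x p * y q - x q * y p) = 0)).resolve_right hdet
    rw [hc2, hp, hq, Pi.single_zero, Pi.single_zero, add_zero]

end LinearAlgebra

theorem Nat.card_quot_eq_of_transversal {α β : Type*} {r : α → α → Prop} (hr : Equivalence r)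
    (f : β → α) (hsurj : ∀ x, ∃ b, r (f b) x) (hinj : ∀ b b', r (f b) (f b') → b = b') :
    Nat.card (Quot r) = Nat.card β :=
  (Nat.card_eq_of_bijective (Quot.mk r ∘ f)
    ⟨fun b b' h => hinj b b' (hr.eqvGen_iff.1 (Quot.eqvGen_exact h)),
      Quot.ind fun x => (hsurj x).imp fun _ => Quot.sound⟩).symm

-- The facets through the bottom vertex `v_k` (`t = n`) or the top vertex `w_{k+1}` (`t = n + 1`).
def vertexFacets (n : ℕ) (k : Fin n) (t : ℕ) : Set (Fin (n + 2)) :=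
  {j | ((j : ℕ) < n ∧ (j : ℕ) ≠ k) ∨ (j : ℕ) = t}

theorem ncard_vertexFacets {n : ℕ} (k : Fin n) {t : ℕ} (ht : n ≤ t) (ht' : t < n + 2) :
    (vertexFacets n k t).ncard = n := by
  have hk := k.isLt
  have h : vertexFacets n k t = Fin.val ⁻¹' ↑(insert t ((Finset.range n).erase k)) := by
    ext j; simp [vertexFacets]; omega
  rw [h, Set.ncard_preimage_of_injective_subset_range Fin.val_injective, Set.ncard_coe_finset,
    Finset.card_insert_of_notMem (by simp; omega), Finset.card_erase_of_mem (by simp),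
    Finset.card_range, Nat.sub_add_cancel (by omega)]
  intro x hx
  simp only [Finset.coe_insert, Finset.coe_erase, Finset.coe_range, Set.mem_insert_iff,
    Set.mem_sdiff, Set.mem_Iio] at hx
  exact ⟨⟨x, by omega⟩, rfl⟩

theorem linearIndependent_of_span_vertexFacets_eq_top {K : Type*} [Field K] {n : ℕ}
    {l : Fin (n + 2) → Fin n → K} {k : Fin n} {t : ℕ} (ht : n ≤ t) (ht' : t < n + 2)
    (h : span K (l '' vertexFacets n k t) = ⊤) :
    LinearIndependent K (fun j : vertexFacets n k t => l j) := by
  classical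
  refine linearIndependent_of_top_le_span_of_card_eq_finrank ?_ ?_
  · rw [← Set.image_eq_range, h]
  · rw [← Nat.card_eq_fintype_card, Nat.card_coe_set_eq, ncard_vertexFacets k ht ht',
      Module.finrank_fin_fun]

theorem prismCharFn_iff_span {n : ℕ} {l : Fin (n + 2) → Fin n → ZMod 2} :
    prismCharFn n l ↔ ∀ k : Fin n, span (ZMod 2) (l '' vertexFacets n k n) = ⊤ ∧
      span (ZMod 2) (l '' vertexFacets n k (n + 1)) = ⊤ := by
  refine forall_congr' fun k => ⟨fun h => ⟨h.1.2, h.2.2⟩, fun h => ⟨⟨?_, h.1⟩, ?_, h.2⟩⟩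
  · exact linearIndependent_of_span_vertexFacets_eq_top le_rfl (by omega) h.1
  · exact linearIndependent_of_span_vertexFacets_eq_top (by omega) (by omega) h.2

theorem djEquiv_equivalence (n : ℕ) : Equivalence (djEquiv n) where
  refl l := ⟨LinearEquiv.refl _ _, rfl⟩
  symm := by
    rintro l1 l2 ⟨θ, rfl⟩
    exact ⟨θ.symm, by simp⟩
  trans := by
    rintro l1 l2 l3 ⟨θ, rfl⟩ ⟨σ, rfl⟩
    exact ⟨θ.trans σ, rfl⟩

theorem djEquiv.prismCharFn {n : ℕ} {l l' : Fin (n + 2) → Fin n → ZMod 2}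
    (h : djEquiv n l l') (hl : prismCharFn n l) : prismCharFn n l' := by
  obtain ⟨θ, rfl⟩ := h
  have key : ∀ s : Set (Fin (n + 2)), span (ZMod 2) (l '' s) = ⊤ →
      span (ZMod 2) ((fun j => θ (l j)) '' s) = ⊤ := fun s hs => by
    rw [← Set.image_image, ← LinearEquiv.coe_toLinearMap, ← Submodule.map_span, hs,
      Submodule.map_top, LinearEquiv.range]
  rw [prismCharFn_iff_span] at hl ⊢
  exact fun k => ⟨key _ (hl k).1, key _ (hl k).2⟩

theorem djEquiv.eq_sum {n : ℕ} {l l' : Fin (n + 2) → Fin n → ZMod 2} (h : djEquiv n l l')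
    {i : Fin (n + 2)} {s : Finset (Fin (n + 2))} (hl : l i = ∑ j ∈ s, l j) :
    l' i = ∑ j ∈ s, l' j := by
  obtain ⟨θ, rfl⟩ := h
  simp [hl]

section Normalized

variable {K : Type*} [Field K] {m : ℕ}

-- `b_0 = a`, `b_j = e_{j-1}` for `1 ≤ j ≤ n`, `b_{n+1} = v`.
def normalizedData {n : ℕ} (a v : Fin n → K) : Fin (n + 2) → Fin n → K :=
  Fin.cons a (Fin.snoc (fun i => Pi.single i 1) v)

@[simp] theorem normalizedData_zero {n : ℕ} (a v : Fin n → K) : normalizedData a v 0 = a := rfl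

@[simp] theorem normalizedData_last {n : ℕ} (a v : Fin n → K) :
    normalizedData a v (Fin.last (n + 1)) = v := by
  simp [normalizedData, ← Fin.succ_last]

@[simp] theorem normalizedData_castSucc_succ {n : ℕ} (a v : Fin n → K) (i : Fin n) :
    normalizedData a v i.castSucc.succ = Pi.single i 1 := by
  simp [normalizedData]

theorem vertexFacets_zero_bottom :
    vertexFacets (m + 1) 0 (m + 1) = Set.range (fun i : Fin (m + 1) => i.castSucc.succ) := by
  ext j
  cases j using Fin.cases with
  | zero => simp [vertexFacets]
  | succ j => cases j using Fin.lastCases <;> simp [vertexFacets]; omega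

theorem vertexFacets_succ_bottom (p : Fin m) :
    vertexFacets (m + 1) p.succ (m + 1) =
      insert 0 ((fun i : Fin (m + 1) => i.castSucc.succ) '' {p.castSucc}ᶜ) := by
  ext j
  cases j using Fin.cases with
  | zero => simp [vertexFacets]
  | succ j => cases j using Fin.lastCases <;> simp [vertexFacets, ← Fin.val_ne_iff]; omega

theorem vertexFacets_zero_top :
    vertexFacets (m + 1) 0 (m + 2) =
      insert (Fin.last _) ((fun i : Fin (m + 1) => i.castSucc.succ) '' {Fin.last m}ᶜ) := by
  ext j
  simp only [vertexFacets, Set.mem_ofPred_eq]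
  cases j using Fin.cases with
  | zero => simp
  | succ j => cases j using Fin.lastCases <;> simp [← Fin.val_ne_iff]; omega

theorem vertexFacets_succ_top (p : Fin m) :
    vertexFacets (m + 1) p.succ (m + 2) = insert 0 (insert (Fin.last _)
      ((fun i : Fin (m + 1) => i.castSucc.succ) '' {p.castSucc, Fin.last m}ᶜ)) := by
  ext j
  simp only [vertexFacets, Set.mem_ofPred_eq]
  cases j using Fin.cases with
  | zero => simp
  | succ j => cases j using Fin.lastCases <;> simp [← Fin.val_ne_iff]; omega

theorem span_image_vertexFacets_zero_bottom (a v : Fin (m + 1) → K) :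
    span K (normalizedData a v '' vertexFacets (m + 1) 0 (m + 1)) = ⊤ := by
  rw [vertexFacets_zero_bottom, ← Set.range_comp]
  convert (Pi.basisFun K (Fin (m + 1))).span_eq using 3
  ext1 i
  simp

theorem span_image_vertexFacets_succ_bottom (a v : Fin (m + 1) → K) (p : Fin m) :
    span K (normalizedData a v '' vertexFacets (m + 1) p.succ (m + 1)) = ⊤ ↔
      a p.castSucc ≠ 0 := by
  rw [vertexFacets_succ_bottom, Set.image_insert_eq, Set.image_image]
  simpa using span_insert_single_compl_eq_top_iff

theorem span_image_vertexFacets_zero_top (a v : Fin (m + 1) → K) :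
    span K (normalizedData a v '' vertexFacets (m + 1) 0 (m + 1 + 1)) = ⊤ ↔
      v (Fin.last m) ≠ 0 := by
  rw [vertexFacets_zero_top, Set.image_insert_eq, Set.image_image]
  simpa using span_insert_single_compl_eq_top_iff

theorem span_image_vertexFacets_succ_top (a v : Fin (m + 1) → K) (p : Fin m) :
    span K (normalizedData a v '' vertexFacets (m + 1) p.succ (m + 1 + 1)) = ⊤ ↔
      a p.castSucc * v (Fin.last m) - a (Fin.last m) * v p.castSucc ≠ 0 := by
  rw [vertexFacets_succ_top, Set.image_insert_eq, Set.image_insert_eq, Set.image_image]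
  simpa using span_insert_insert_single_compl_eq_top_iff (Fin.castSucc_ne_last p)

theorem prismCharFn_normalizedData_iff_minors (a v : Fin (m + 1) → ZMod 2) :
    prismCharFn (m + 1) (normalizedData a v) ↔
      (∀ p : Fin m, a p.castSucc ≠ 0) ∧ v (Fin.last m) ≠ 0 ∧
        ∀ p : Fin m, a p.castSucc * v (Fin.last m) - a (Fin.last m) * v p.castSucc ≠ 0 := by
  simp only [prismCharFn_iff_span, Fin.forall_fin_succ, span_image_vertexFacets_zero_bottom,
    span_image_vertexFacets_succ_bottom, span_image_vertexFacets_zero_top,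
    span_image_vertexFacets_succ_top, true_and, forall_and]

theorem prismCharFn_normalizedData_iff (a v : Fin (m + 1) → ZMod 2) :
    prismCharFn (m + 1) (normalizedData a v) ↔
      (a = Fin.snoc 1 0 ∧ v (Fin.last m) = 1) ∨ (a = 1 ∧ v = Pi.single (Fin.last m) 1) := by
  have hne : ∀ x : ZMod 2, x ≠ 0 ↔ x = 1 := by decide
  rw [prismCharFn_normalizedData_iff_minors]
  simp only [hne]
  constructor
  · rintro ⟨ha, hv, hminor⟩
    simp only [ha, hv, mul_one, sub_eq_self, mul_eq_zero] at hminor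
    rcases (by decide : ∀ x : ZMod 2, x = 0 ∨ x = 1) (a (Fin.last m)) with hlast | hlast
    · refine Or.inl ⟨funext fun i => ?_, hv⟩
      cases i using Fin.lastCases <;> simp [ha, hlast]
    · have hv' : ∀ p : Fin m, v p.castSucc = 0 := fun p => by simpa [hlast] using hminor p
      refine Or.inr ⟨funext fun i => ?_, funext fun i => ?_⟩ <;>
        cases i using Fin.lastCases <;> simp [ha, hlast, hv, hv', Fin.castSucc_ne_last]
  · rintro (⟨rfl, hv⟩ | ⟨rfl, rfl⟩)
    · simp [hv]
    · simp

theorem prismCharFn_normalizedData_first (w : Fin m → ZMod 2) :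
    prismCharFn (m + 1) (normalizedData (Fin.snoc 1 0) (Fin.snoc w 1)) :=
  (prismCharFn_normalizedData_iff _ _).2 (Or.inl ⟨rfl, by simp⟩)

theorem exists_djEquiv_normalizedData {l : Fin (m + 1 + 2) → Fin (m + 1) → ZMod 2}
    (hl : prismCharFn (m + 1) l) : ∃ a v, djEquiv (m + 1) l (normalizedData a v) := by
  have hspan := (prismCharFn_iff_span.1 hl 0).1
  rw [vertexFacets_zero_bottom, ← Set.range_comp] at hspan
  let B := Module.Basis.mk (linearIndependent_of_top_le_span_of_card_eq_finrank hspan.ge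
    (by simp)) hspan.ge
  refine ⟨B.equivFun (l 0), B.equivFun (l (Fin.last _)), B.equivFun, funext fun j => ?_⟩
  cases j using Fin.cases with
  | zero => rfl
  | succ j =>
    cases j using Fin.lastCases with
    | last => simp
    | cast i =>
      have hB : l i.castSucc.succ = B i := by simp [B]
      ext j
      simp [hB, Pi.single_apply, eq_comm]

theorem eq_of_djEquiv_normalizedData {n : ℕ} {a v a' v' : Fin n → ZMod 2}
    (h : djEquiv n (normalizedData a v) (normalizedData a' v')) : a = a' ∧ v = v' := by
  obtain ⟨θ, hθ⟩ := h
  have hid : θ = LinearEquiv.refl _ _ := (Pi.basisFun (ZMod 2) (Fin n)).ext' fun i => by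
    simpa using (congrFun hθ i.castSucc.succ).symm
  subst hid
  exact ⟨(congrFun hθ 0).symm, by simpa using (congrFun hθ (Fin.last _)).symm⟩

theorem sum_normalizedData (a v : Fin (m + 1) → ZMod 2) :
    ∑ j ∈ Finset.univ.filter (fun j : Fin (m + 1 + 2) => 1 ≤ (j : ℕ) ∧ (j : ℕ) ≤ m),
      normalizedData a v j = Fin.snoc 1 0 := by
  rw [Finset.sum_filter, Fin.sum_univ_succ, Fin.sum_univ_castSucc, Fin.sum_univ_castSucc]
  funext i
  cases i using Fin.lastCases <;> simp [Pi.single_apply]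

theorem card_quot_djEquiv_firstMethod :
    Nat.card (Quot (fun l1 l2 : {l : Fin (m + 1 + 2) → (Fin (m + 1) → ZMod 2) //
        prismCharFn (m + 1) l ∧ l 0 = ∑ j ∈ Finset.univ.filter
          (fun j : Fin (m + 1 + 2) => 1 ≤ (j : ℕ) ∧ (j : ℕ) ≤ m), l j} =>
      djEquiv (m + 1) l1.1 l2.1)) = 2 ^ m := by
  rw [Nat.card_quot_eq_of_transversal ((djEquiv_equivalence _).comap Subtype.val) fun w =>
    ⟨_, prismCharFn_normalizedData_first w, (sum_normalizedData _ _).symm⟩]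
  · simp
  · rintro ⟨l, hl, hsum⟩
    obtain ⟨a, v, hlv⟩ := exists_djEquiv_normalizedData hl
    have ha : a = Fin.snoc 1 0 := by simpa [sum_normalizedData] using hlv.eq_sum hsum
    have hv : v (Fin.last m) = 1 := by
      rcases (prismCharFn_normalizedData_iff a v).1 (hlv.prismCharFn hl) with h | ⟨rfl, -⟩
      · exact h.2
      · simpa using (congrFun ha (Fin.last m)).symm
    refine ⟨Fin.init v, (djEquiv_equivalence _).symm ?_⟩
    simpa [← ha, ← hv] using hlv
  · intro w w' h
    simpa using (eq_of_djEquiv_normalizedData h).2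

theorem card_quot_djEquiv :
    Nat.card (Quot (fun l1 l2 : {l : Fin (m + 1 + 2) → (Fin (m + 1) → ZMod 2) //
        prismCharFn (m + 1) l} => djEquiv (m + 1) l1.1 l2.1)) = 1 + 2 ^ m := by
  let rep : Option (Fin m → ZMod 2) → {l // prismCharFn (m + 1) l}
    | some w => ⟨_, prismCharFn_normalizedData_first w⟩
    | none => ⟨normalizedData 1 (Pi.single (Fin.last m) 1),
        (prismCharFn_normalizedData_iff _ _).2 (Or.inr ⟨rfl, rfl⟩)⟩
  rw [Nat.card_quot_eq_of_transversal ((djEquiv_equivalence _).comap Subtype.val) rep]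
  · simp [add_comm]
  · rintro ⟨l, hl⟩
    obtain ⟨a, v, hlv⟩ := exists_djEquiv_normalizedData hl
    rcases (prismCharFn_normalizedData_iff a v).1 (hlv.prismCharFn hl) with ⟨rfl, hv⟩ | ⟨rfl, rfl⟩
    · refine ⟨some (Fin.init v), (djEquiv_equivalence _).symm ?_⟩
      simpa [rep, ← hv] using hlv
    · exact ⟨none, (djEquiv_equivalence _).symm hlv⟩
  · have hne : (Fin.snoc 1 0 : Fin (m + 1) → ZMod 2) ≠ 1 := fun h => by
      simpa using congrFun h (Fin.last m)
    rintro (_ | w) (_ | w') h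
    · rfl
    · exact absurd (eq_of_djEquiv_normalizedData h).1.symm hne
    · exact absurd (eq_of_djEquiv_normalizedData h).1 hne
    · simpa using (eq_of_djEquiv_normalizedData h).2

end Normalized

/-- For `n ≥ 3`, the first-method characteristic functions
(`b₀ = b₁ + ⋯ + b_{n-1}`) form exactly `2^{n-1}` D-J classes, and in total there are
exactly `1 + 2^{n-1}` D-J equivalence classes of `ℤ/2`-characteristic functions on the
prism `Δ^{n-1} × I`. -/
theorem stmt_5 (n : ℕ) (hn : 3 ≤ n) :
    Nat.card (Quot (fun l1 l2 : {l : Fin (n + 2) → (Fin n → ZMod 2) //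
        prismCharFn n l ∧
          l 0 = ∑ j ∈ Finset.univ.filter
            (fun j : Fin (n + 2) => 1 ≤ (j : ℕ) ∧ (j : ℕ) ≤ n - 1), l j} =>
      djEquiv n l1.1 l2.1)) = 2 ^ (n - 1) ∧
    Nat.card (Quot (fun l1 l2 : {l : Fin (n + 2) → (Fin n → ZMod 2) //
        prismCharFn n l} => djEquiv n l1.1 l2.1)) = 1 + 2 ^ (n - 1) := by
  obtain ⟨m, rfl⟩ : ∃ m, n = m + 1 := ⟨n - 1, by omega⟩
  simp only [Nat.add_sub_cancel]
  exact ⟨card_quot_djEquiv_firstMethod, card_quot_djEquiv⟩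
end

section
/- Let n ≥ 2 and let Γ be an (n+1)-regular properly edge-colored graph with colors {0,…,n} in which every bi-colored cycle has length exactly 4, and suppose for every subset {k_0,…,k_i} ⊆ {0,…,n} of size i+1 the number of connected components of the subgraph induced by colors {k_0,…,k_i} equals 2^{n-i-1} (for 0 ≤ i ≤ n−1). Then Γ has exactly 2^n vertices, and each connected component of the subgraph induced by any k-element color set is isomorphic (as a colored graph) to the 1-skeleton of the k-dimensional cube with parallel edge classes monochromatic. -/
/-!
Since every bi-colored cycle is a square, the color involutions `φ c` commute, so the cube group
`{c // c ∈ C} → ZMod 2` acts on the vertices. The orbit of `v` is the component of `v` in the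
subgraph of colors `C`, so it has at most `2 ^ |C|` vertices, with equality iff the orbit map
`x ↦ x • v` is injective. For a single color the orbits are the edges `{v, φ 0 v}`, so the
`2 ^ (n - 1)` components have two vertices each and `|V| = 2 ^ n`. For `1 ≤ |C| ≤ n` the
`2 ^ (n - |C|)` orbits of size at most `2 ^ |C|` cover all `2 ^ n` vertices, so every orbit map
is injective and is the required isomorphism with the cube.
-/

open Function Relation Finset

lemma Function.Involutive.commute_of_involutive_comp {α : Type*} {f g : α → α}
    (hf : Involutive f) (hg : Involutive g) (hfg : Involutive (f ∘ g)) : Function.Commute f g :=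
  fun v => by simpa only [comp_apply, hf v, hg (f v)] using hfg (g (f v))

lemma Finset.card_eq_mul_iff_forall_card_fiber_eq {α β : Type*} [Fintype α] [Fintype β]
    [DecidableEq β] (f : α → β) {m : ℕ} (hle : ∀ b, #{a | f a = b} ≤ m) :
    Fintype.card α = Fintype.card β * m ↔ ∀ b, #{a | f a = b} = m := by
  rw [← card_univ, card_eq_sum_card_fiberwise fun a _ => mem_univ (f a), ← card_univ,
    ← smul_eq_mul, ← sum_const, sum_eq_sum_iff_of_le fun b _ => hle b]
  simp only [mem_univ, true_imp_iff]

section CubeAddHom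

variable {M : Type*} [Monoid M]

def zmodTwoAddHom (a : M) (ha : a * a = 1) : ZMod 2 →+ Additive M where
  toFun x := Additive.ofMul (a ^ x.val)
  map_zero' := by rw [ZMod.val_zero, pow_zero, ofMul_one]
  map_add' x y := by
    rw [ZMod.val_add, ← pow_eq_pow_mod _ (by rw [sq, ha]), pow_add, ofMul_mul]

variable {ι : Type*} [Fintype ι]

def cubeAddHom (a : ι → M) (ha : ∀ i, a i * a i = 1) (hcomm : ∀ i j, Commute (a i) (a j)) :
    (ι → ZMod 2) →+ Additive M :=
  AddMonoidHom.noncommPiCoprod (fun i => zmodTwoAddHom (a i) (ha i)) fun i j _ _ _ => by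
    change Additive.ofMul _ + Additive.ofMul _ = Additive.ofMul _ + Additive.ofMul _
    rw [← ofMul_mul, ← ofMul_mul, ((hcomm i j).pow_pow _ _).eq]

lemma cubeAddHom_single [DecidableEq ι] (a : ι → M) (ha : ∀ i, a i * a i = 1)
    (hcomm : ∀ i j, Commute (a i) (a j)) (i : ι) :
    cubeAddHom a ha hcomm (Pi.single i 1) = Additive.ofMul (a i) :=
  (AddMonoidHom.noncommPiCoprod_single _ _ _).trans (congrArg Additive.ofMul (pow_one (a i)))

end CubeAddHom

section CubeMap

variable {V ι : Type*} [Fintype ι] (φ : ι → V → V) (hinv : ∀ i, Involutive (φ i))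
  (hcomm : ∀ i j, Function.Commute (φ i) (φ j))

/-- `cubeMap φ hinv hcomm x` is the composite of the `φ i` with `x i = 1`. -/
def cubeMap (x : ι → ZMod 2) : Equiv.Perm V :=
  Additive.toMul <| cubeAddHom (fun i => (hinv i).toPerm) (fun i => Equiv.ext (hinv i))
    (fun i j => Equiv.ext (hcomm i j)) x

variable {φ hinv hcomm}

lemma cubeMap_zero : cubeMap φ hinv hcomm 0 = 1 := by
  rw [cubeMap, map_zero, toMul_zero]

lemma cubeMap_add (x y : ι → ZMod 2) :
    cubeMap φ hinv hcomm (x + y) = cubeMap φ hinv hcomm x * cubeMap φ hinv hcomm y := by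
  simp only [cubeMap, map_add, toMul_add]

lemma cubeMap_single [DecidableEq ι] (i : ι) :
    cubeMap φ hinv hcomm (Pi.single i 1) = (hinv i).toPerm :=
  (congrArg Additive.toMul (cubeAddHom_single _ _ _ i)).trans (toMul_ofMul _)

lemma cubeMap_add_single_apply [DecidableEq ι] (x : ι → ZMod 2) (i : ι) (v : V) :
    cubeMap φ hinv hcomm (x + Pi.single i 1) v = φ i (cubeMap φ hinv hcomm x v) := by
  rw [add_comm, cubeMap_add, cubeMap_single, Equiv.Perm.mul_apply, Involutive.coe_toPerm]

lemma range_cubeMap (v : V) :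
    Set.range (cubeMap φ hinv hcomm · v) = {w | ReflTransGen (fun a b => ∃ i, φ i a = b) v w} := by
  classical
  ext w
  constructor
  · rintro ⟨x, rfl⟩
    refine Pi.single_induction
      (fun x => ∀ v, ReflTransGen (fun a b => ∃ i, φ i a = b) v (cubeMap φ hinv hcomm x v))
      x (fun v => ?_) (fun x y hx hy v => ?_) (fun i m v => ?_) v
    · rw [cubeMap_zero]
      exact .refl
    · rw [cubeMap_add, Equiv.Perm.mul_apply]
      exact (hy v).trans (hx _)
    · obtain rfl | rfl : m = 0 ∨ m = 1 := by decide +revert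
      · rw [Pi.single_zero, cubeMap_zero]
        exact .refl
      · rw [cubeMap_single]
        exact .single ⟨i, rfl⟩
  · intro hw
    induction hw with
    | refl => exact ⟨0, by simp [cubeMap_zero]⟩
    | tail _ hstep ih =>
      obtain ⟨x, rfl⟩ := ih
      obtain ⟨i, rfl⟩ := hstep
      exact ⟨x + Pi.single i 1, cubeMap_add_single_apply x i v⟩

lemma quotMk_eq_quotMk_iff_mem_range_cubeMap (v w : V) :
    Quot.mk (fun a b => ∃ i, φ i a = b) w = Quot.mk _ v ↔
      w ∈ Set.range (cubeMap φ hinv hcomm · v) := by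
  have : Std.Symm fun a b => ∃ i, φ i a = b := ⟨fun a b ⟨i, hab⟩ => ⟨i, hab ▸ hinv i a⟩⟩
  rw [Quot.eq, EqvGen.eqvGen_eq_reflTransGen, range_cubeMap, Set.mem_ofPred_eq]
  exact comm

lemma card_eq_iff_forall_injective_cubeMap [Fintype V] :
    Fintype.card V = Nat.card (Quot fun a b => ∃ i, φ i a = b) * 2 ^ Fintype.card ι ↔
      ∀ v, Injective (cubeMap φ hinv hcomm · v) := by
  classical
  let := Fintype.ofFinite (Quot fun a b => ∃ i, φ i a = b)
  have hcube : Fintype.card (ι → ZMod 2) = 2 ^ Fintype.card ι := by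
    rw [Fintype.card_fun, ZMod.card]
  have hfiber (v : V) : ({w | Quot.mk (fun a b => ∃ i, φ i a = b) w = Quot.mk _ v} : Finset V) =
      univ.image (cubeMap φ hinv hcomm · v) := by
    ext w
    simp only [mem_filter, mem_univ, true_and, mem_image]
    exact quotMk_eq_quotMk_iff_mem_range_cubeMap v w
  have hle : ∀ q, #{w | Quot.mk (fun a b => ∃ i, φ i a = b) w = q} ≤ 2 ^ Fintype.card ι :=
    Quot.mk_surjective.forall.2 fun v => by
      rw [hfiber, ← hcube]
      exact card_image_le
  rw [Nat.card_eq_fintype_card, card_eq_mul_iff_forall_card_fiber_eq _ hle,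
    Quot.mk_surjective.forall]
  refine forall_congr' fun v => ?_
  rw [hfiber, ← hcube, ← card_univ, card_image_iff, coe_univ, Set.injOn_univ]

lemma injective_cubeMap_of_subsingleton [Subsingleton ι] [DecidableEq ι]
    (hfree : ∀ i w, φ i w ≠ w) (v : V) : Injective (cubeMap φ hinv hcomm · v) := by
  intro x y hxy
  by_contra hne
  obtain ⟨i, hi⟩ := Function.ne_iff.1 hne
  have hy : y = x + Pi.single i 1 := funext fun j => by
    obtain rfl := Subsingleton.elim j i
    have hflip : ∀ a b : ZMod 2, a ≠ b → b = a + 1 := by decide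
    simpa using hflip _ _ hi
  apply hfree i (cubeMap φ hinv hcomm x v)
  rw [← cubeMap_add_single_apply (hcomm := hcomm), ← hy]
  exact hxy.symm

end CubeMap

/-- An `(n+1)`-regular properly edge-colored graph is encoded by its color
matchings: for each color `c ∈ {0,…,n}` a fixed-point-free involution `φ c` on the vertex
set (`φ c v` is the vertex joined to `v` by the `c`-colored edge).  Suppose every
bi-colored cycle has length exactly four (for `k ≠ l`: `φ k v ≠ φ l v` and
`(φ k ∘ φ l)² = id`), and for every color set `C` with `1 ≤ |C| ≤ n` the subgraph induced
by `C` has exactly `2^{n-|C|}` connected components.  Then the graph has exactly `2ⁿ`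
vertices, and every connected component of the subgraph induced by a color set `C`
(`|C| ≤ n`) is colored-isomorphic to the `|C|`-dimensional cube with parallel edge classes
monochromatic: there is a bijection `f` from `{0,1}^C` onto the component such that the
`c`-colored edges correspond to flipping the coordinate `c`. -/
theorem stmt_8 (n : ℕ) (hn : 2 ≤ n) (V : Type) [Fintype V]
    (φ : Fin (n + 1) → V → V)
    (hinv : ∀ c, Function.Involutive (φ c))
    (hfpf : ∀ c v, φ c v ≠ v)
    (hlen4 : ∀ k l : Fin (n + 1), k ≠ l → ∀ v : V,
      φ k v ≠ φ l v ∧ φ k (φ l (φ k (φ l v))) = v)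
    (hcomp : ∀ C : Finset (Fin (n + 1)), 1 ≤ C.card → C.card ≤ n →
      Nat.card (Quot (fun v w : V => ∃ c ∈ C, φ c v = w)) = 2 ^ (n - C.card)) :
    Fintype.card V = 2 ^ n ∧
    ∀ C : Finset (Fin (n + 1)), C.card ≤ n → ∀ v : V,
      ∃ f : ({c // c ∈ C} → ZMod 2) → V,
        Function.Injective f ∧ f 0 = v ∧
        Set.range f =
          {w | Relation.ReflTransGen (fun a b => ∃ c ∈ C, φ c a = b) v w} ∧
        ∀ (x : {c // c ∈ C} → ZMod 2) (c : {c // c ∈ C}),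
          f (x + Pi.single c 1) = φ c.1 (f x) := by
  have hcomm (k l : Fin (n + 1)) : Function.Commute (φ k) (φ l) := by
    obtain rfl | hkl := eq_or_ne k l
    · exact .refl _
    · exact (hinv k).commute_of_involutive_comp (hinv l) (hlen4 k l hkl · |>.2)
  have hrel (C : Finset (Fin (n + 1))) :
      (fun a b : V => ∃ c : C, φ c a = b) = fun a b => ∃ c ∈ C, φ c a = b := by
    simp only [Subtype.exists, exists_prop]
  have hcard (C : Finset (Fin (n + 1))) (hC₁ : 1 ≤ C.card) (hC : C.card ≤ n) :
      Fintype.card V = 2 ^ n ↔ ∀ v, Injective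
        (cubeMap (fun c : C => φ c) (fun c => hinv c) (fun c d => hcomm c d) · v) := by
    rw [← card_eq_iff_forall_injective_cubeMap, hrel, hcomp C hC₁ hC, Fintype.card_coe,
      ← pow_add, Nat.sub_add_cancel hC]
  have hV : Fintype.card V = 2 ^ n :=
    (hcard {0} le_rfl (by rw [card_singleton]; omega)).2
      (injective_cubeMap_of_subsingleton fun c => hfpf c)
  refine ⟨hV, fun C hC v =>
    ⟨(cubeMap (fun c : C => φ c) (fun c => hinv c) (fun c d => hcomm c d) · v), ?_,
      by simp [cubeMap_zero], by rw [range_cubeMap, hrel], fun x c => cubeMap_add_single_apply x c v⟩⟩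
  obtain rfl | hne := C.eq_empty_or_nonempty
  · exact injective_of_subsingleton _
  · exact (hcard C hne.card_pos hC).1 hV v
end

section
/- Up to colored-graph isomorphism, there is a unique (n+1)-regular properly edge-colored graph on 2^n vertices with colors {0,…,n} (n ≥ 2) satisfying: (i) every bi-colored cycle has length ≥ 4, and (ii) for every color subset of size i+1 (0 ≤ i ≤ n−1), the number of connected components of the induced subgraph is 2^{n-i-1}. Namely, it is the n-cube with monochromatic parallel edge classes in colors 0,…,n−1, together with the n-colored perfect matching joining antipodal vertices. -/
/-!
Two distinct colors `k, l` span components with at least four vertices, since `w`, `k w`, `l w`,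
`k l w` are distinct by (i); as there are `2ⁿ⁻²` such components on `2ⁿ` vertices, each has exactly
four, so `l k w = k l w` and the involutions commute. Commuting involutions give an action of
`(ℤ/2)ⁿ`, and `x ↦ (∏_{x j = 1} φ j) v₀` is onto because colors `0, …, n-1` span a single component,
hence a bijection by counting. In these coordinates color `n` is a translation by some `t`, and
`t = (1, …, 1)`: if `t i = 0`, the vectors with `x i = 0` would be closed under all colors but `i`,
which span a single component.
-/

/-- The standard colored graph on `{0,1}ⁿ`: the `j`-colored edge (`j < n`) flips the `j`-th
coordinate, and the `n`-colored edge joins antipodal vectors. -/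
def stdCube (n : ℕ) (c : Fin (n + 1)) (v : Fin n → ZMod 2) : Fin n → ZMod 2 :=
  if h : (c : ℕ) < n then v + Pi.single (⟨(c : ℕ), h⟩ : Fin n) 1 else v + 1

open Finset Function

section CubeProd

variable {ι M : Type*} [Fintype ι] [Monoid M]

def cubeProd (g : ι → M) (hg : ∀ a b, Commute (g a) (g b)) (x : ι → ZMod 2) : M :=
  univ.noncommProd (fun i => g i ^ (x i).val)
    (Set.pairwise_of_forall _ _ fun a b => (hg a b).pow_pow _ _)

variable (g : ι → M) (hg : ∀ a b, Commute (g a) (g b))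

lemma cubeProd_add (hsq : ∀ i, g i ^ 2 = 1) (x y : ι → ZMod 2) :
    cubeProd g hg (x + y) = cubeProd g hg x * cubeProd g hg y := by
  unfold cubeProd
  rw [← noncommProd_mul_distrib]
  · congr 1
    funext i
    rw [Pi.mul_apply, ← pow_add, Pi.add_apply, ZMod.val_add, ← pow_eq_pow_mod _ (hsq i)]
  · exact Set.pairwise_of_forall _ _ fun a b => (hg a b).pow_pow _ _

lemma cubeProd_single [DecidableEq ι] (j : ι) : cubeProd g hg (Pi.single j 1) = g j := by
  unfold cubeProd
  rw [← mul_noncommProd_erase _ (mem_univ j)]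
  convert mul_one (g j)
  · simp only [Pi.single_eq_same]; exact pow_one _
  · refine (noncommProd_eq_pow_card _ _ _ 1 fun i hi => ?_).trans (one_pow _)
    simp [Pi.single_eq_of_ne (ne_of_mem_erase hi)]

lemma Commute.cubeProd_right {y : M} (hy : ∀ i, Commute y (g i)) (x : ι → ZMod 2) :
    Commute y (cubeProd g hg x) :=
  noncommProd_commute _ _ _ _ fun i _ => (hy i).pow_right _

end CubeProd

lemma mul_card_lt_card_of_lt_card_fiber {α β : Type*} [Fintype α] [Fintype β] [DecidableEq β]
    {f : α → β} {m : ℕ} (hle : ∀ b, m ≤ #{a | f a = b}) {b₀ : β} (hlt : m < #{a | f a = b₀}) :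
    m * Fintype.card β < Fintype.card α := calc
  _ = ∑ _b : β, m := by simp [mul_comm]
  _ < ∑ b, #{a | f a = b} := sum_lt_sum (fun b _ => hle b) ⟨b₀, mem_univ _, hlt⟩
  _ = Fintype.card α := (card_eq_sum_card_fiberwise fun a _ => mem_univ (f a)).symm

section ColorRel

variable {ι V : Type*} (φ : ι → V → V)

def colorRel (C : Finset ι) (v w : V) : Prop := ∃ c ∈ C, φ c v = w

variable {φ}

lemma mk_colorRel_apply {C : Finset ι} {c : ι} (hc : c ∈ C) (v : V) :
    Quot.mk (colorRel φ C) (φ c v) = Quot.mk (colorRel φ C) v :=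
  (Quot.sound ⟨c, hc, rfl⟩).symm

lemma eq_univ_of_subsingleton_quot_colorRel (hinv : ∀ c, Involutive (φ c)) {C : Finset ι}
    (hC : Subsingleton (Quot (colorRel φ C))) {s : Set V} (hs : ∀ c ∈ C, ∀ v ∈ s, φ c v ∈ s)
    (hne : s.Nonempty) : s = Set.univ := by
  obtain ⟨v₀, hv₀⟩ := hne
  let memS : Quot (colorRel φ C) → Prop := Quot.lift (· ∈ s) <| by
    rintro v _ ⟨c, hc, rfl⟩
    exact propext ⟨hs c hc v, fun h => hinv c v ▸ hs c hc _ h⟩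
  refine Set.eq_univ_of_forall fun v => ?_
  change memS (Quot.mk _ v)
  rw [← Subsingleton.elim (Quot.mk (colorRel φ C) v₀) (Quot.mk _ v)]
  exact hv₀

lemma commute_of_card_le_four_mul [Fintype V] [DecidableEq ι] (hinv : ∀ c, Involutive (φ c))
    (hfpf : ∀ c v, φ c v ≠ v) (hlen : ∀ k l, k ≠ l → ∀ v : V, φ k v ≠ φ l v)
    {k l : ι} (hkl : k ≠ l)
    (hcard : Fintype.card V ≤ 4 * Nat.card (Quot (colorRel φ {k, l}))) :
    Function.Commute (φ k) (φ l) := by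
  classical
  intro v
  by_contra hv
  let q : V → Quot (colorRel φ {k, l}) := Quot.mk _
  have hqk : ∀ w, q (φ k w) = q w := mk_colorRel_apply (by simp)
  have hql : ∀ w, q (φ l w) = q w := mk_colorRel_apply (by simp)
  have hsq : ∀ c w, φ c (φ c w) = w := fun c => hinv c
  have hkl_apply := hlen k l hkl
  have hsquare : ∀ w, [w, φ k w, φ l w, φ k (φ l w)].Nodup := fun w => by
    simp only [List.nodup_cons, List.mem_cons, List.not_mem_nil]
    grind
  have hpentagon : (φ l (φ k v) :: [v, φ k v, φ l v, φ k (φ l v)]).Nodup := by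
    simp only [List.nodup_cons, List.mem_cons, List.not_mem_nil]
    grind
  have hclass : ∀ w u, u ∈ [w, φ k w, φ l w, φ k (φ l w)] → q u = q w := by
    simp [hqk, hql]
  have hfiber : ∀ b, 4 ≤ #{u | q u = b} := by
    rintro ⟨w⟩
    refine (List.toFinset_card_of_nodup (hsquare w)).symm.le.trans <| card_le_card fun u hu => ?_
    simpa using hclass w u (List.mem_toFinset.mp hu)
  have hfiber_lt : 4 < #{u | q u = q v} :=
    (List.toFinset_card_of_nodup hpentagon).symm.le.trans <| card_le_card fun u hu => by
      rcases List.mem_cons.mp (List.mem_toFinset.mp hu) with rfl | hu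
      · simp [hqk, hql]
      · simpa using hclass v u hu
  have : Fintype (Quot (colorRel φ {k, l})) := Fintype.ofFinite _
  have hlt := mul_card_lt_card_of_lt_card_fiber hfiber hfiber_lt
  rw [Nat.card_eq_fintype_card] at hcard
  omega

end ColorRel

section Cube

variable {n : ℕ} {V : Type*} {φ : Fin (n + 1) → V → V}

lemma stdCube_castSucc (j : Fin n) (v : Fin n → ZMod 2) :
    stdCube n j.castSucc v = v + Pi.single j 1 := by
  simp [stdCube]

lemma stdCube_last (v : Fin n → ZMod 2) : stdCube n (Fin.last n) v = v + 1 := by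
  simp [stdCube]

lemma surjective_of_map_single_add (hinv : ∀ c, Involutive (φ c))
    (hconn : Subsingleton (Quot (colorRel φ (univ.map Fin.castSuccEmb))))
    {f : (Fin n → ZMod 2) → V} (hstep : ∀ j x, f (Pi.single j 1 + x) = φ j.castSucc (f x)) :
    Surjective f := by
  refine Set.range_eq_univ.mp (eq_univ_of_subsingleton_quot_colorRel hinv hconn ?_ ⟨f 0, 0, rfl⟩)
  simp only [mem_map, mem_univ, true_and, Fin.coe_castSuccEmb]
  rintro _ ⟨j, rfl⟩ _ ⟨x, rfl⟩
  exact ⟨_, hstep j x⟩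

lemma exists_equiv_cube [Fintype V] (hcard : Fintype.card V = 2 ^ n)
    (hinv : ∀ c, Involutive (φ c)) (hco : ∀ k l, Function.Commute (φ k) (φ l))
    (hconn : Subsingleton (Quot (colorRel φ (univ.map Fin.castSuccEmb)))) :
    ∃ (f : (Fin n → ZMod 2) ≃ V) (t : Fin n → ZMod 2),
      (∀ j x, f (Pi.single j 1 + x) = φ j.castSucc (f x)) ∧
      ∀ x, φ (Fin.last n) (f x) = f (x + t) := by
  obtain ⟨v₀⟩ : Nonempty V := Fintype.card_pos_iff.mp (by simp [hcard])
  let σ : Fin (n + 1) → Equiv.Perm V := fun c => (hinv c).toPerm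
  have hσ : ∀ k l, Commute (σ k) (σ l) := fun k l => Equiv.ext (hco k l)
  have hsq : ∀ c, σ c ^ 2 = 1 := fun c => Equiv.ext (hinv c)
  let g : Fin n → Equiv.Perm V := fun j => σ j.castSucc
  have hg : ∀ a b, Commute (g a) (g b) := fun a b => hσ _ _
  let f : (Fin n → ZMod 2) → V := fun x => cubeProd g hg x v₀
  have hstep : ∀ j x, f (Pi.single j 1 + x) = φ j.castSucc (f x) := fun j x => by
    simp only [f]
    rw [cubeProd_add g hg (fun _ => hsq _), cubeProd_single, Equiv.Perm.mul_apply]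
    rfl
  have hsurj := surjective_of_map_single_add hinv hconn hstep
  have hbij := (Fintype.bijective_iff_surjective_and_card _).mpr ⟨hsurj, by simp [hcard]⟩
  obtain ⟨t, ht⟩ := hsurj (φ (Fin.last n) v₀)
  refine ⟨Equiv.ofBijective _ hbij, t, hstep, fun x => ?_⟩
  have hcomm := (Commute.cubeProd_right g hg (fun j => hσ (Fin.last n) j.castSucc) x).eq
  calc φ (Fin.last n) (f x) = cubeProd g hg x (σ (Fin.last n) v₀) := congrArg (· v₀) hcomm
    _ = f (x + t) := by
      simp only [f]
      rw [cubeProd_add g hg (fun _ => hsq _), Equiv.Perm.mul_apply]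
      exact congrArg _ ht.symm

lemma shift_eq_one_of_subsingleton_quot (hinv : ∀ c, Involutive (φ c))
    (hconn : ∀ i : Fin n, Subsingleton (Quot (colorRel φ (univ.erase i.castSucc))))
    {f : (Fin n → ZMod 2) → V} (hf : Injective f) {t : Fin n → ZMod 2}
    (hstep : ∀ j x, f (Pi.single j 1 + x) = φ j.castSucc (f x))
    (hlast : ∀ x, φ (Fin.last n) (f x) = f (x + t)) : t = 1 := by
  funext i
  by_contra hti
  replace hti : t i = 0 := (by decide : ∀ a : ZMod 2, a ≠ 1 → a = 0) _ hti
  have hclosed : ∀ c ∈ univ.erase i.castSucc, ∀ v ∈ f '' {x | x i = 0},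
      φ c v ∈ f '' {x | x i = 0} := by
    rintro c hc _ ⟨x, hx, rfl⟩
    cases c using Fin.lastCases with
    | last => exact ⟨x + t, by simp_all, (hlast x).symm⟩
    | cast j =>
      have hji : j ≠ i := fun h => by simp [h] at hc
      exact ⟨Pi.single j 1 + x, by simp_all [hji.symm], hstep j x⟩
  obtain ⟨x, hx, hxi⟩ : f (Pi.single i 1) ∈ f '' {x | x i = 0} := by
    rw [eq_univ_of_subsingleton_quot_colorRel hinv (hconn i) hclosed ⟨f 0, 0, rfl, rfl⟩]
    trivial
  simp [hf hxi] at hx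

end Cube

/-- Up to colored-graph isomorphism (a bijection of vertices together with a
bijection of colors), there is a unique `(n+1)`-regular properly edge-colored graph on
`2ⁿ` vertices (`n ≥ 2`), encoded by fixed-point-free involutions `φ c`, satisfying: (i)
every bi-colored cycle has length `≥ 4`, and (ii) for every color set `C` with
`1 ≤ |C| ≤ n` the subgraph induced by `C` has exactly `2^{n-|C|}` connected components.
Namely, it is the `n`-cube with monochromatic parallel classes in colors `0,…,n-1`
together with the `n`-colored antipodal matching. -/
theorem stmt_9 (n : ℕ) (hn : 2 ≤ n) (V : Type) [Fintype V]
    (hcard : Fintype.card V = 2 ^ n)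
    (φ : Fin (n + 1) → V → V)
    (hinv : ∀ c, Function.Involutive (φ c))
    (hfpf : ∀ c v, φ c v ≠ v)
    (hlen : ∀ k l : Fin (n + 1), k ≠ l → ∀ v : V, φ k v ≠ φ l v)
    (hcomp : ∀ C : Finset (Fin (n + 1)), 1 ≤ C.card → C.card ≤ n →
      Nat.card (Quot (fun v w : V => ∃ c ∈ C, φ c v = w)) = 2 ^ (n - C.card)) :
    ∃ (σ : Equiv.Perm (Fin (n + 1))) (f : (Fin n → ZMod 2) ≃ V),
      ∀ (c : Fin (n + 1)) (v : Fin n → ZMod 2),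
        f (stdCube n c v) = φ (σ c) (f v) := by
  have hcount : ∀ C, 1 ≤ C.card → C.card ≤ n →
      Nat.card (Quot (colorRel φ C)) = 2 ^ (n - C.card) := hcomp
  have hconn : ∀ C : Finset (Fin (n + 1)), C.card = n → Subsingleton (Quot (colorRel φ C)) :=
    fun C hC => (Nat.card_eq_one_iff_unique.mp (by simpa [hC] using hcount C (by omega) hC.le)).1
  have hco : ∀ k l, Function.Commute (φ k) (φ l) := by
    intro k l
    rcases eq_or_ne k l with rfl | hkl
    · exact Function.Commute.refl _
    refine commute_of_card_le_four_mul hinv hfpf hlen hkl (le_of_eq ?_)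
    rw [hcard, hcount {k, l} (by simp [card_pair hkl]) (by simp [card_pair hkl]; omega),
      card_pair hkl, show 4 = 2 ^ 2 from rfl, ← pow_add, Nat.add_sub_cancel' hn]
  obtain ⟨f, t, hstep, hlast⟩ := exists_equiv_cube hcard hinv hco (hconn _ (by simp))
  have ht : t = 1 := shift_eq_one_of_subsingleton_quot hinv
    (fun i => hconn _ (by simp [card_erase_of_mem])) f.injective hstep hlast
  refine ⟨1, f, fun c x => ?_⟩
  cases c using Fin.lastCases with
  | last => rw [stdCube_last, ← ht, ← hlast]; rfl
  | cast j => rw [stdCube_castSucc, add_comm, hstep]; rfl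
end

section
/- Let n ≥ 3 be odd and suppose λ is a ℤ/2-characteristic function on the prism Δ^{n-1} × I satisfying b_0 = b_1 + ⋯ + b_{n-1} (first method). Then the associated colored graph Γ (gem of the small cover M^n(λ)) is non-bipartite. Concretely: in the bipartite 2-coloring argument, the parity assignment to vertices T_i^j fails to extend consistently across the 0-colored edges when n is odd. -/
/-- The gem (edge-colored graph) of the small cover `Mⁿ(λ)` over the prism
`Δ^{n-1} × I` coming from its standard colored triangulation.  Vertices are the pairs
`(g, j)` with `g ∈ ℤ₂ⁿ` and `1 ≤ j ≤ n`, corresponding to the `n`-simplices `t_g^j`, and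
`gemNbr n b c (g, j)` is the vertex joined to `(g, j)` by the edge of color `c ∈ {0,…,n}`.
Here `b m = λ(F_m)` for the facets `F_0,…,F_{n+1}` of the prism.  Facets of `t_g` and
`t_h` are identified iff `g + h` equals the characteristic vector of the corresponding
prism facet; the facet of `t_g^j` opposite the color-`(n-j)` vertex is internal (shared
with `t_g^{j+1}`), as is the one opposite color `n-j+1` (shared with `t_g^{j-1}`). -/
def gemNbr (n : ℕ) (b : ℕ → (Fin n → ZMod 2)) (c : ℕ)
    (p : (Fin n → ZMod 2) × ℕ) : (Fin n → ZMod 2) × ℕ :=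
  let g := p.1
  let j := p.2
  if j < n ∧ c = n - j then (g, j + 1)
  else if 1 < j ∧ c = n - j + 1 then (g, j - 1)
  else if j = n ∧ c = 0 then (g + b (n + 1), j)
  else if j = 1 ∧ c = n then (g + b n, j)
  else if c < n - j then (g + b c, j)
  else (g + b (c - 1), j)

/-- Let `n ≥ 3` be odd and let `λ` be a `ℤ/2`-characteristic function on
`Δ^{n-1} × I` of the first method: `b₁,…,b_{n-1}` linearly independent,
`b₀ = b₁ + ⋯ + b_{n-1}`, and `bₙ, b_{n+1}` outside the span of `{b₁,…,b_{n-1}}`.  Then the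
associated gem is non-bipartite (no parity assignment to the vertices `T_g^j` makes every
edge change the parity), hence the small cover `Mⁿ(λ)` is non-orientable. -/
theorem stmt_12 (n : ℕ) (hn : 3 ≤ n) (hodd : Odd n)
    (b : ℕ → (Fin n → ZMod 2))
    (hind : LinearIndependent (ZMod 2) (fun i : Fin (n - 1) => b ((i : ℕ) + 1)))
    (hb0 : b 0 = ∑ i : Fin (n - 1), b ((i : ℕ) + 1))
    (hbn : b n ∉ Submodule.span (ZMod 2)
      (Set.range (fun i : Fin (n - 1) => b ((i : ℕ) + 1))))
    (hbn1 : b (n + 1) ∉ Submodule.span (ZMod 2)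
      (Set.range (fun i : Fin (n - 1) => b ((i : ℕ) + 1)))) :
    ¬ ∃ sign : (Fin n → ZMod 2) × ℕ → Bool,
        ∀ c ≤ n, ∀ (g : Fin n → ZMod 2), ∀ j, 1 ≤ j → j ≤ n →
          sign (gemNbr n b c (g, j)) = ! sign (g, j) := by
  rintro ⟨sign, hs⟩
  -- characteristic-two fact
  have hself : ∀ x : Fin n → ZMod 2, x + x = 0 := by
    intro x; funext i; exact CharTwo.add_self_eq_zero (x i)
  -- the key sum: b 0 + b 1 + ⋯ + b (n-2) = b (n-1)
  have hsum : ∑ c ∈ Finset.range (n - 1), b c = b (n - 1) := by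
    have hrange : b 0 = ∑ i ∈ Finset.range (n - 1), b (i + 1) := by
      rw [hb0, Finset.sum_range fun i => b (i + 1)]
    have h0 : ∑ c ∈ Finset.range n, b c = 0 := by
      obtain ⟨m, hm⟩ : ∃ m, n = m + 1 := ⟨n - 1, by omega⟩
      subst hm
      rw [Finset.sum_range_succ' (fun c => b c) m]
      have : (m + 1) - 1 = m := by omega
      rw [this] at hrange
      rw [← hrange, hself]
    obtain ⟨m, hm⟩ : ∃ m, n = m + 1 := ⟨n - 1, by omega⟩
    subst hm
    rw [Finset.sum_range_succ] at h0
    have hms : (m + 1) - 1 = m := by omega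
    rw [hms]
    have := congrArg (· + b m) h0
    simpa [add_assoc, hself] using this
  -- step lemma at level j = 1 with colors c < n - 1
  have stepA : ∀ k, k < n - 1 → ∀ g : Fin n → ZMod 2,
      gemNbr n b k (g, 1) = (g + b k, 1) := by
    intro k hk g
    have c1 : ¬ (1 < n ∧ k = n - 1) := by omega
    have c2 : ¬ (1 < 1 ∧ k = n - 1 + 1) := by omega
    have c3 : ¬ (1 = n ∧ k = 0) := by omega
    have c4 : ¬ (1 = 1 ∧ k = n) := by omega
    have c5 : k < n - 1 := hk
    simp only [gemNbr, if_neg c1, if_neg c2, if_neg c3, if_pos c5]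
    have c4' : ¬ (True ∧ k = n) := by simp; omega
    rw [if_neg c4']
  -- going up from j = 1 to j = 2 with color n - 1
  have stepB : ∀ g : Fin n → ZMod 2, gemNbr n b (n - 1) (g, 1) = (g, 2) := by
    intro g
    have c1 : (1 < n ∧ n - 1 = n - 1) := ⟨by omega, rfl⟩
    simp [gemNbr, c1]
  -- color n at level j = 2 adds b (n - 1)
  have stepC : ∀ g : Fin n → ZMod 2, gemNbr n b n (g, 2) = (g + b (n - 1), 2) := by
    intro g
    have c1 : ¬ (2 < n ∧ n = n - 2) := by omega
    have c2 : ¬ (1 < 2 ∧ n = n - 2 + 1) := by omega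
    have c3 : ¬ (2 = n ∧ n = 0) := by omega
    have c4 : ¬ (2 = 1 ∧ n = n) := by omega
    have c5 : ¬ (n < n - 2) := by omega
    have hnn : n - 1 = n - 1 := rfl
    simp only [gemNbr, if_neg c1, if_neg c2, if_neg c3, if_neg c5]
    have c4' : ¬ (2 = 1 ∧ True) := by simp
    rw [if_neg c4']
  -- going down from j = 2 to j = 1 with color n - 1
  have stepD : ∀ g : Fin n → ZMod 2, gemNbr n b (n - 1) (g, 2) = (g, 1) := by
    intro g
    have c1 : ¬ (2 < n ∧ n - 1 = n - 2) := by omega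
    have c2 : (1 < 2 ∧ n - 1 = n - 2 + 1) := ⟨by omega, by omega⟩
    simp [gemNbr, c1, c2]
  -- walk along level j = 1 using colors 0, 1, …, k-1
  have key : ∀ k, k ≤ n - 1 →
      sign (∑ c ∈ Finset.range k, b c, 1) =
        (if k % 2 = 0 then sign (0, 1) else ! sign (0, 1)) := by
    intro k
    induction k with
    | zero => intro _; simp
    | succ k ih =>
      intro hk
      have hk' : k < n - 1 := by omega
      have hedge := hs k (by omega) (∑ c ∈ Finset.range k, b c) 1 le_rfl (by omega)
      rw [stepA k hk' _] at hedge
      rw [Finset.sum_range_succ]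
      rw [hedge, ih (by omega)]
      rcases Nat.even_or_odd k with h | h
      · have h1 : k % 2 = 0 := Nat.even_iff.mp h
        have h2 : ¬ ((k + 1) % 2 = 0) := by omega
        simp [h1, h2]
      · have h1 : ¬ (k % 2 = 0) := by
          have := Nat.odd_iff.mp h; omega
        have h2 : (k + 1) % 2 = 0 := by
          have := Nat.odd_iff.mp h; omega
        simp [h1, h2]
  -- n - 1 is even since n is odd
  have hpar : (n - 1) % 2 = 0 := by
    obtain ⟨m, hm⟩ := hodd; omega
  have h1 : sign (b (n - 1), 1) = sign (0, 1) := by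
    have := key (n - 1) le_rfl
    rw [hsum] at this
    simpa [hpar] using this
  have h2 : sign (b (n - 1), 2) = ! sign (b (n - 1), 1) := by
    have := hs (n - 1) (by omega) (b (n - 1)) 1 le_rfl (by omega)
    rwa [stepB] at this
  have h3 : sign (0, 2) = ! sign (b (n - 1), 2) := by
    have := hs n le_rfl (b (n - 1)) 2 (by omega) (by omega)
    rwa [stepC, hself] at this
  have h4 : sign (0, 1) = ! sign (0, 2) := by
    have := hs (n - 1) (by omega) 0 2 (by omega) (by omega)
    rwa [stepD] at this
  rw [h3, h2, h1, Bool.not_not] at h4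
  exact Bool.not_ne_self _ h4.symm
end

section
/- Let n ≥ 4 be even and let λ be a ℤ/2-characteristic function on Δ^{n-1} × I from the first method, with b_{n+1} = b_n + Σ_{j∈J} b_j for J ⊆ {1,…,n−1}. Model the orientability parity as follows: vertices of the graph carry signs determined by a bipartition of the orientable part Γ_3, and T_k^n is joined to T_l^n by a 0-colored edge iff g_k + g_l = b_{n+1}. Then the resulting graph is bipartite (hence M^n(λ) orientable) iff |J| is even. -/
/-- Let `n ≥ 4` be even and `λ` a first-method characteristic function on
`Δ^{n-1} × I` with `b_{n+1} = bₙ + Σ_{j ∈ J} b_j`, `J ⊆ {1,…,n-1}`.  Then the gem is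
bipartite (equivalently, the small cover `Mⁿ(λ)` is orientable) iff `|J|` is even. -/
theorem stmt_13 (n : ℕ) (hn : 4 ≤ n) (heven : Even n)
    (b : ℕ → (Fin n → ZMod 2))
    (hind : LinearIndependent (ZMod 2) (fun i : Fin (n - 1) => b ((i : ℕ) + 1)))
    (hb0 : b 0 = ∑ i : Fin (n - 1), b ((i : ℕ) + 1))
    (hbn : b n ∉ Submodule.span (ZMod 2)
      (Set.range (fun i : Fin (n - 1) => b ((i : ℕ) + 1))))
    (J : Finset ℕ) (hJ : J ⊆ Finset.Icc 1 (n - 1))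
    (hbn1 : b (n + 1) = b n + ∑ j ∈ J, b j) :
    (∃ sign : (Fin n → ZMod 2) × ℕ → Bool,
        ∀ c ≤ n, ∀ (g : Fin n → ZMod 2), ∀ j, 1 ≤ j → j ≤ n →
          sign (gemNbr n b c (g, j)) = ! sign (g, j)) ↔ Even J.card := by
  obtain ⟨m, rfl⟩ : ∃ m, n = m + 1 := ⟨n - 1, by omega⟩
  simp only [Nat.add_sub_cancel] at hind hb0 hbn hJ
  have hm : 3 ≤ m := by omega
  -- computations of `gemNbr` on particular edges
  have E1 : ∀ (g : Fin (m+1) → ZMod 2) (j : ℕ), 1 ≤ j → j < m + 1 →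
      gemNbr (m+1) b (m+1-j) (g, j) = (g, j + 1) := by
    intro g j h1 h2
    simp only [gemNbr]
    split_ifs <;> first | rfl | (exfalso; simp only [and_true, true_and,
      and_false, false_and] at *; omega)
  have E2 : ∀ (g : Fin (m+1) → ZMod 2),
      gemNbr (m+1) b (m+1) (g, 1) = (g + b (m+1), 1) := by
    intro g
    simp only [gemNbr]
    rw [if_neg (by omega), if_neg (by omega), if_neg (by omega), if_pos (by constructor <;> trivial)]
  have E3 : ∀ (g : Fin (m+1) → ZMod 2) (a : ℕ), 1 ≤ a → a ≤ m →
      gemNbr (m+1) b (a+1) (g, m+1) = (g + b a, m+1) := by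
    intro g a h1 h2
    simp only [gemNbr]
    rw [if_neg (by omega), if_neg (by omega), if_neg (by omega), if_neg (by omega),
      if_neg (by omega)]
    simp only [Nat.add_sub_cancel]
  have E4 : ∀ (g : Fin (m+1) → ZMod 2),
      gemNbr (m+1) b 0 (g, m+1) = (g + b (m+1+1), m+1) := by
    intro g
    simp only [gemNbr]
    rw [if_neg (by omega), if_neg (by omega), if_pos (by constructor <;> trivial)]
  constructor
  · rintro ⟨sign, hs⟩
    have hstep : ∀ (g : Fin (m+1) → ZMod 2) (j : ℕ), 1 ≤ j → j < m + 1 →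
        sign (g, j + 1) = ! sign (g, j) := by
      intro g j h1 h2
      have := hs (m+1-j) (by omega) g j h1 (by omega)
      rwa [E1 g j h1 h2] at this
    have hbn' : ∀ (k : ℕ), 1 ≤ k → k ≤ m + 1 → ∀ (g : Fin (m+1) → ZMod 2),
        sign (g + b (m+1), k) = ! sign (g, k) := by
      intro k
      induction k with
      | zero => omega
      | succ k ih =>
        intro h1 h2 g
        rcases Nat.lt_or_ge 0 k with hk | hk
        · rw [hstep _ k (by omega) (by omega), ih (by omega) (by omega) g,
            hstep g k (by omega) (by omega)]
        · have hk0 : k = 0 := by omega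
          subst hk0
          have := hs (m+1) (le_refl _) g 1 (le_refl _) (by omega)
          rwa [E2 g] at this
    have hbj : ∀ (g : Fin (m+1) → ZMod 2) (a : ℕ), 1 ≤ a → a ≤ m →
        sign (g + b a, m+1) = ! sign (g, m+1) := by
      intro g a h1 h2
      have := hs (a+1) (by omega) g (m+1) (by omega) (le_refl _)
      rwa [E3 g a h1 h2] at this
    have hsum : ∀ (S : Finset ℕ), S ⊆ Finset.Icc 1 m → ∀ (g : Fin (m+1) → ZMod 2),
        sign (g + ∑ j ∈ S, b j, m+1) = xor (decide (Odd S.card)) (sign (g, m+1)) := by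
      intro S
      induction S using Finset.induction_on with
      | empty => intro _ g; simp
      | @insert a S ha ih =>
        intro hsub g
        have haJ : a ∈ Finset.Icc 1 m := hsub (Finset.mem_insert_self a S)
        rw [Finset.mem_Icc] at haJ
        rw [Finset.sum_insert ha,
          show g + (b a + ∑ j ∈ S, b j) = (g + ∑ j ∈ S, b j) + b a by ring,
          hbj _ a haJ.1 haJ.2, ih (fun x hx => hsub (Finset.mem_insert_of_mem hx)) g,
          Finset.card_insert_of_notMem ha]
        cases hd : decide (Odd S.card) <;>
          cases hss : sign (g, m+1) <;>
            simp_all [Nat.odd_add_one]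
    have e4 := hs 0 (by omega) 0 (m+1) (by omega) (le_refl _)
    rw [E4 0] at e4
    rw [show (0 : Fin (m+1) → ZMod 2) + b (m+1+1) = (0 + b (m+1)) + ∑ j ∈ J, b j by
      rw [hbn1]; ring] at e4
    rw [hsum J hJ (0 + b (m+1)), hbn' (m+1) (by omega) (le_refl _) 0] at e4
    rcases Nat.even_or_odd J.card with h | h
    · exact h
    · exfalso; simp [h] at e4
  · -- construct the sign function from a "sum of coordinates" linear functional
    intro hE
    have hw : LinearIndependent (ZMod 2) (fun i : Fin (m+1) => b ((i : ℕ) + 1)) := by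
      have hrw : (fun i : Fin (m+1) => b ((i : ℕ) + 1)) =
          Fin.snoc (fun i : Fin m => b ((i : ℕ) + 1)) (b (m+1)) := by
        funext i
        by_cases h : (i : ℕ) < m
        · rw [show i = Fin.castSucc ⟨(i : ℕ), h⟩ from Fin.ext rfl, Fin.snoc_castSucc]
          rfl
        · rw [show i = Fin.last m from Fin.ext (by simp only [Fin.val_last]; omega),
            Fin.snoc_last]
          simp only [Fin.val_last]
      rw [hrw, linearIndependent_fin_snoc]
      exact ⟨hind, hbn⟩
    have hcard : Fintype.card (Fin (m+1)) =
        Module.finrank (ZMod 2) (Fin (m+1) → ZMod 2) := by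
      simp [Module.finrank_fin_fun]
    set B := basisOfLinearIndependentOfCardEqFinrank hw hcard with hB
    have hBapp : ∀ i : Fin (m+1), B i = b ((i : ℕ) + 1) := by
      intro i
      rw [hB, coe_basisOfLinearIndependentOfCardEqFinrank]
    set φ : (Fin (m+1) → ZMod 2) →ₗ[ZMod 2] ZMod 2 :=
      ∑ i : Fin (m+1), B.coord i with hφ
    have hφB : ∀ i : Fin (m+1), φ (B i) = 1 := by
      intro i
      rw [hφ]
      simp [Module.Basis.coord_apply, Module.Basis.repr_self, Finsupp.single_apply]
    have hφk : ∀ k : ℕ, 1 ≤ k → k ≤ m + 1 → φ (b k) = 1 := by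
      intro k h1 h2
      have hbk : b k = B ⟨k - 1, by omega⟩ := by
        rw [hBapp ⟨k - 1, by omega⟩]
        show b k = b ((k - 1) + 1)
        rw [Nat.sub_add_cancel h1]
      rw [hbk, hφB]
    have hmod : ((m : ℕ) : ZMod 2) = 1 := by
      have h2 : m % 2 = 1 := by
        obtain ⟨t, ht⟩ := heven
        omega
      rw [← ZMod.natCast_mod, h2, Nat.cast_one]
    have hφ0 : φ (b 0) = 1 := by
      rw [hb0, map_sum]
      rw [Finset.sum_congr rfl
        (fun (i : Fin (m + 1 - 1)) _ => hφk ((i : ℕ) + 1) (by omega) (by have := i.2; omega))]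
      simp only [Finset.sum_const, Finset.card_univ, Fintype.card_fin,
        Nat.add_sub_cancel, nsmul_eq_mul, mul_one]
      exact hmod
    have hφn1 : φ (b (m+1+1)) = 1 := by
      rw [hbn1, map_add, map_sum, hφk (m+1) (by omega) (le_refl _)]
      have : ∀ j ∈ J, φ (b j) = 1 := by
        intro j hj
        have := Finset.mem_Icc.mp (hJ hj)
        exact hφk j this.1 (by omega)
      rw [Finset.sum_congr rfl this, Finset.sum_const]
      obtain ⟨t, ht⟩ := hE
      have hc0 : ((J.card : ℕ) : ZMod 2) = 0 := by
        rw [← ZMod.natCast_mod, show J.card % 2 = 0 by omega, Nat.cast_zero]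
      rw [nsmul_eq_mul, hc0, zero_mul, add_zero]
    have hall : ∀ k : ℕ, k ≤ m + 1 + 1 → φ (b k) = 1 := by
      intro k hk
      rcases Nat.eq_zero_or_pos k with rfl | h1
      · exact hφ0
      · rcases Nat.lt_or_ge k (m+1+1) with h2 | h2
        · exact hφk k h1 (by omega)
        · have : k = m+1+1 := by omega
          rw [this]; exact hφn1
    have hfl : ∀ x : ZMod 2, decide (x + 1 = 1) = ! decide (x = 1) := by decide
    refine ⟨fun p => decide (φ p.1 + (p.2 : ZMod 2) = 1), ?_⟩
    intro c hc g j hj1 hjn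
    simp only [gemNbr]
    split_ifs with h1 h2 h3 h4 h5
    · -- (g, j+1)
      show decide (φ g + ((j + 1 : ℕ) : ZMod 2) = 1) = ! decide (φ g + (j : ZMod 2) = 1)
      rw [show φ g + ((j + 1 : ℕ) : ZMod 2) = (φ g + (j : ZMod 2)) + 1 by push_cast; ring]
      exact hfl _
    · -- (g, j-1)
      show decide (φ g + ((j - 1 : ℕ) : ZMod 2) = 1) = ! decide (φ g + (j : ZMod 2) = 1)
      rw [show φ g + ((j - 1 : ℕ) : ZMod 2) = (φ g + (j : ZMod 2)) + 1 by
        rw [Nat.cast_sub hj1, CharTwo.sub_eq_add]; push_cast; ring]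
      exact hfl _
    · -- (g + b (n+1), j)
      show decide (φ (g + b (m+1+1)) + (j : ZMod 2) = 1) = ! decide (φ g + (j : ZMod 2) = 1)
      rw [show φ (g + b (m+1+1)) + (j : ZMod 2) = (φ g + (j : ZMod 2)) + 1 by
        rw [map_add, hall (m+1+1) (le_refl _)]; ring]
      exact hfl _
    · -- (g + b n, j)
      show decide (φ (g + b (m+1)) + (j : ZMod 2) = 1) = ! decide (φ g + (j : ZMod 2) = 1)
      rw [show φ (g + b (m+1)) + (j : ZMod 2) = (φ g + (j : ZMod 2)) + 1 by
        rw [map_add, hall (m+1) (by omega)]; ring]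
      exact hfl _
    · -- (g + b c, j)
      show decide (φ (g + b c) + (j : ZMod 2) = 1) = ! decide (φ g + (j : ZMod 2) = 1)
      rw [show φ (g + b c) + (j : ZMod 2) = (φ g + (j : ZMod 2)) + 1 by
        rw [map_add, hall c (by omega)]; ring]
      exact hfl _
    · -- (g + b (c-1), j)
      show decide (φ (g + b (c-1)) + (j : ZMod 2) = 1) = ! decide (φ g + (j : ZMod 2) = 1)
      rw [show φ (g + b (c-1)) + (j : ZMod 2) = (φ g + (j : ZMod 2)) + 1 by
        rw [map_add, hall (c-1) (by omega)]; ring]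
      exact hfl _
end

section
/- Let Γ be an (n+1)-regular properly edge-colored graph with 2^n vertices in which, for some triple of colors {i,j,k}, some connected component of the subgraph induced by {i,j,k} contains an i-colored edge forming a diagonal of a {j,k}-bicolored 4-cycle structure such that all {i,j}- and {i,k}-bicolored cycles through it have length 4. Then that component has at most 6 vertices and every vertex in it meets an i-colored edge within the component. -/
/-- Let `Γ` be an `(n+1)`-regular properly edge-colored graph on `2ⁿ`
vertices, encoded by fixed-point-free involutions `φ c` (the color matchings).  Suppose
for a triple of distinct colors `i, j, k`, some component of the subgraph induced by
`{i,j,k}` contains an `i`-colored edge forming a diagonal of a `{j,k}`-bicolored 4-cycle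
(`φ i v₀ = φ j (φ k v₀)` with `φ j (φ k (φ j (φ k v₀))) = v₀`), and all `{i,j}`- and
`{i,k}`-bicolored cycles have length 4.  Then that component has at most 6 vertices and
every vertex in it meets an `i`-colored edge staying within the component. -/
theorem stmt_19 (n : ℕ) (hn : 2 ≤ n) (V : Type) [Fintype V]
    (hcard : Fintype.card V = 2 ^ n)
    (φ : Fin (n + 1) → V → V)
    (hinv : ∀ c, Function.Involutive (φ c))
    (hfpf : ∀ c v, φ c v ≠ v)
    (i j k : Fin (n + 1)) (hij : i ≠ j) (hik : i ≠ k) (hjk : j ≠ k)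
    (v₀ : V)
    (hcyc : φ j (φ k (φ j (φ k v₀))) = v₀)
    (hdiag : φ i v₀ = φ j (φ k v₀))
    (hij4 : ∀ v : V, φ i v ≠ φ j v ∧ φ i (φ j (φ i (φ j v))) = v)
    (hik4 : ∀ v : V, φ i v ≠ φ k v ∧ φ i (φ k (φ i (φ k v))) = v) :
    Nat.card {w : V // Relation.ReflTransGen
        (fun a b => φ i a = b ∨ φ j a = b ∨ φ k a = b) v₀ w} ≤ 6 ∧
    ∀ w : V, Relation.ReflTransGen
        (fun a b => φ i a = b ∨ φ j a = b ∨ φ k a = b) v₀ w →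
      Relation.ReflTransGen
        (fun a b => φ i a = b ∨ φ j a = b ∨ φ k a = b) v₀ (φ i w) := by

  set x1 := φ k v₀ with hx1
  set x2 := φ j x1 with hx2
  set x3 := φ k x2 with hx3
  have hj3 : φ j x3 = v₀ := hcyc
  have hiv0 : φ i v₀ = x2 := hdiag
  -- φ j v₀ = x3
  have hjv0 : φ j v₀ = x3 := by rw [← hj3, hinv j]
  -- φ i x3 = x1 from ik-4-cycle... first compute φ i x1
  have hix1 : φ i x1 = x3 := by
    have h := (hik4 v₀).2
    rw [← hx1] at h
    have h2 : φ k (φ i x1) = φ i v₀ := by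
      have := congrArg (φ i) h
      rwa [hinv i] at this
    rw [hiv0] at h2
    have := congrArg (φ k) h2
    rwa [hinv k, ← hx3] at this
  have hix3 : φ i x3 = x1 := by rw [← hix1, hinv i]
  have hix2 : φ i x2 = v₀ := by rw [← hiv0, hinv i]
  have hjx2 : φ j x2 = x1 := by rw [hx2, hinv j]
  have hkx1 : φ k x1 = v₀ := by rw [hx1, hinv k]
  have hkx3 : φ k x3 = x2 := by rw [hx3, hinv k]
  set R := fun a b : V => φ i a = b ∨ φ j a = b ∨ φ k a = b with hR
  set S : Set V := {v₀, x1, x2, x3} with hS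
  have hclosed : ∀ w ∈ S, ∀ u, R w u → u ∈ S := by
    intro w hw u hu
    rcases hw with rfl | rfl | rfl | rfl <;>
      rcases hu with rfl | rfl | rfl <;>
      simp only [hS, hiv0, hix1, hix2, hix3, hjv0, hx2, hjx2, hj3, hx1, hkx1, hx3, hkx3,
        Set.mem_insert_iff, Set.mem_singleton_iff] <;> tauto
  have hmem : ∀ w, Relation.ReflTransGen R v₀ w → w ∈ S := by
    intro w h
    induction h with
    | refl => exact Set.mem_insert _ _
    | tail h1 h2 ih => exact hclosed _ ih _ h2
  constructor
  · have h1 : Nat.card {w : V // Relation.ReflTransGen R v₀ w} ≤ Nat.card S :=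
      Nat.card_mono (Set.toFinite S) hmem
    refine le_trans h1 (le_trans ?_ (by norm_num : 4 ≤ 6))
    rw [Nat.card_coe_set_eq, hS]
    refine le_trans (Set.ncard_insert_le _ _) (Nat.succ_le_succ ?_)
    refine le_trans (Set.ncard_insert_le _ _) (Nat.succ_le_succ ?_)
    refine le_trans (Set.ncard_insert_le _ _) (Nat.succ_le_succ ?_)
    exact le_of_eq (Set.ncard_singleton _)
  · intro w hw
    exact hw.tail (Or.inl rfl)
end
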